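/- Let A be an n×n symmetric positive definite matrix with condition number κ_A and η > 0. For every x in the unit simplex Ω, the spectral radius of ηI − ∇²φ_A(x) is at most η + 2n κ_A, where φ_A(x) = −ln(xᵀAx). Consequently x ↦ (η/2)‖x‖² − ln(xᵀAx) is (η + 2nκ_A)-smooth on Ω. -/

import Mathlib

/-!
If `v` is a unit eigenvector of `ηI - ∇²φ_A(x)` with eigenvalue `λ`, then
`λ = η - vᵀ∇²φ_A(x)v = η - 4(vᵀAx)²/(xᵀAx)² + 2vᵀAv/xᵀAx`. Cauchy–Schwarz for the inner product
`(u, w) ↦ uᵀAw` gives `(vᵀAx)² ≤ (vᵀAv)(xᵀAx)`, so the rank-one term lies between `0` and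
`4vᵀAv/xᵀAx`, whence `|λ - η| ≤ 2vᵀAv/xᵀAx`. Finally `vᵀAv ≤ λₙ`, and on the simplex
`‖x‖² ≥ 1/n` by Cauchy–Schwarz, so `xᵀAx ≥ λ₁‖x‖² ≥ λ₁/n`.
-/

open Matrix

/-- The Hessian of `φ_A(x) = -ln(xᵀAx)`. -/
noncomputable def hessPhi {n : ℕ} (A : Matrix (Fin n) (Fin n) ℝ) (x : Fin n → ℝ) :
    Matrix (Fin n) (Fin n) ℝ :=
  (4 / (x ⬝ᵥ A.mulVec x) ^ 2) • Matrix.vecMulVec (A.mulVec x) (A.mulVec x)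
    - (2 / (x ⬝ᵥ A.mulVec x)) • A

open scoped MatrixOrder

namespace Matrix

variable {ι : Type*} [Fintype ι] [DecidableEq ι]

theorem PosSemidef.dotProduct_mulVec_sq_le {A : Matrix ι ι ℝ} (hA : A.PosSemidef)
    (x y : ι → ℝ) : (x ⬝ᵥ A *ᵥ y) ^ 2 ≤ (x ⬝ᵥ A *ᵥ x) * (y ⬝ᵥ A *ᵥ y) := by
  simpa only [toBilin'_apply'] using A.toBilin'.apply_sq_le_of_symm
    (fun v => by simpa [toBilin'_apply'] using hA.dotProduct_mulVec_nonneg v)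
    (LinearMap.BilinForm.isSymm_iff.mp <|
      isSymm_toBilin'_iff_isSymm.mpr (isHermitian_iff_isSymm.mp hA.isHermitian)) x y

namespace IsHermitian

theorem dotProduct_mulVec_le {A : Matrix ι ι ℝ} (hA : A.IsHermitian) {c : ℝ}
    (h : ∀ i, hA.eigenvalues i ≤ c) (v : ι → ℝ) : v ⬝ᵥ A *ᵥ v ≤ c * (v ⬝ᵥ v) := by
  have hle : A ≤ algebraMap ℝ _ c := by
    rw [le_algebraMap_iff_spectrum_le (ha := hA.isSelfAdjoint),
      hA.spectrum_real_eq_range_eigenvalues]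
    rintro _ ⟨i, rfl⟩
    exact h i
  simpa only [star_trivial, Algebra.algebraMap_eq_smul_one, sub_mulVec, smul_mulVec, one_mulVec,
    dotProduct_sub, dotProduct_smul, smul_eq_mul, sub_nonneg] using
      (le_iff.mp hle).dotProduct_mulVec_nonneg v

theorem le_dotProduct_mulVec {A : Matrix ι ι ℝ} (hA : A.IsHermitian) {c : ℝ}
    (h : ∀ i, c ≤ hA.eigenvalues i) (v : ι → ℝ) : c * (v ⬝ᵥ v) ≤ v ⬝ᵥ A *ᵥ v := by
  have hle : algebraMap ℝ _ c ≤ A := by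
    rw [algebraMap_le_iff_le_spectrum (ha := hA.isSelfAdjoint),
      hA.spectrum_real_eq_range_eigenvalues]
    rintro _ ⟨i, rfl⟩
    exact h i
  simpa only [star_trivial, Algebra.algebraMap_eq_smul_one, sub_mulVec, smul_mulVec, one_mulVec,
    dotProduct_sub, dotProduct_smul, smul_eq_mul, sub_nonneg] using
      (le_iff.mp hle).dotProduct_mulVec_nonneg v

theorem dotProduct_eigenvectorBasis_self {A : Matrix ι ι ℝ} (hA : A.IsHermitian) (i : ι) :
    (hA.eigenvectorBasis i : ι → ℝ) ⬝ᵥ hA.eigenvectorBasis i = 1 := by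
  have h := real_inner_self_eq_norm_sq (hA.eigenvectorBasis i)
  rw [hA.eigenvectorBasis.orthonormal.1 i, one_pow,
    EuclideanSpace.inner_eq_star_dotProduct] at h
  simpa using h

theorem eigenvalues_smul_one_sub {B : Matrix ι ι ℝ} {c : ℝ} (hM : (c • 1 - B).IsHermitian)
    (i : ι) : hM.eigenvalues i =
      c - (hM.eigenvectorBasis i : ι → ℝ) ⬝ᵥ B *ᵥ hM.eigenvectorBasis i := by
  simpa only [star_trivial, RCLike.re_to_real, sub_mulVec, smul_mulVec, one_mulVec,
    dotProduct_sub, dotProduct_smul, hM.dotProduct_eigenvectorBasis_self, smul_eq_mul,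
    mul_one] using hM.eigenvalues_eq i

end IsHermitian

end Matrix

theorem one_le_card_mul_dotProduct_self_of_mem_stdSimplex {ι : Type*} [Fintype ι]
    {x : ι → ℝ} (hx : x ∈ stdSimplex ℝ ι) : 1 ≤ Fintype.card ι * (x ⬝ᵥ x) := by
  simpa [hx.2, dotProduct, sq] using sq_sum_le_card_mul_sum_sq (s := Finset.univ) (f := x)

theorem dotProduct_hessPhi_mulVec {n : ℕ} (A : Matrix (Fin n) (Fin n) ℝ) (x v : Fin n → ℝ) :
    v ⬝ᵥ hessPhi A x *ᵥ v =
      4 / (x ⬝ᵥ A *ᵥ x) ^ 2 * (v ⬝ᵥ A *ᵥ x) ^ 2 - 2 / (x ⬝ᵥ A *ᵥ x) * (v ⬝ᵥ A *ᵥ v) := by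
  simp only [hessPhi, sub_mulVec, smul_mulVec, vecMulVec_mulVec, dotProduct_sub,
    dotProduct_smul, smul_eq_mul, op_smul_eq_smul]
  rw [dotProduct_comm (A *ᵥ x) v]
  ring

theorem abs_dotProduct_hessPhi_mulVec_le {n : ℕ} {A : Matrix (Fin n) (Fin n) ℝ}
    (hA : A.PosSemidef) (x v : Fin n → ℝ) :
    |v ⬝ᵥ hessPhi A x *ᵥ v| ≤ 2 * (v ⬝ᵥ A *ᵥ v) / (x ⬝ᵥ A *ᵥ x) := by
  rw [dotProduct_hessPhi_mulVec]
  set s := x ⬝ᵥ A *ᵥ x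
  set p := v ⬝ᵥ A *ᵥ v
  set q := v ⬝ᵥ A *ᵥ x
  have hCS : q ^ 2 ≤ p * s := hA.dotProduct_mulVec_sq_le v x
  have hs_nonneg : 0 ≤ s := by simpa using hA.dotProduct_mulVec_nonneg x
  rcases hs_nonneg.eq_or_lt with hs | hs
  · -- both sides are `0`, as division by `0` is `0`
    simp [← hs]
  have hq : 4 / s ^ 2 * q ^ 2 ≤ 2 * (2 * p / s) := by
    rw [div_mul_eq_mul_div, ← mul_div_assoc, div_le_div_iff₀ (by positivity) hs]
    nlinarith
  have h0 : 0 ≤ 4 / s ^ 2 * q ^ 2 := by positivity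
  rw [div_mul_eq_mul_div 2 s p, abs_le]
  constructor <;> linarith

theorem g_smoothness_bound_general (n : ℕ) (A : Matrix (Fin n) (Fin n) ℝ)
    (hA : A.PosDef) (l1 ln κ η : ℝ) (hη : 0 < η)
    (hmin : ∀ i, l1 ≤ hA.isHermitian.eigenvalues i)
    (hminmem : ∃ i, hA.isHermitian.eigenvalues i = l1)
    (hmax : ∀ i, hA.isHermitian.eigenvalues i ≤ ln)
    (hκ : κ = ln / l1) :
    ∀ x ∈ stdSimplex ℝ (Fin n),
      ∀ (hH : (η • (1 : Matrix (Fin n) (Fin n) ℝ) - hessPhi A x).IsHermitian),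
        ∀ i, |hH.eigenvalues i| ≤ η + 2 * n * κ := by
  intro x hx hH i
  set v : Fin n → ℝ := ⇑(hH.eigenvectorBasis i)
  obtain ⟨j, hj⟩ := hminmem
  have hl1 : 0 < l1 := hj ▸ hA.eigenvalues_pos j
  have hp : v ⬝ᵥ A *ᵥ v ≤ ln := by
    simpa [v, hH.dotProduct_eigenvectorBasis_self] using
      hA.isHermitian.dotProduct_mulVec_le hmax v
  have hp0 : 0 ≤ v ⬝ᵥ A *ᵥ v := by simpa using hA.posSemidef.dotProduct_mulVec_nonneg v
  have hs : l1 ≤ n * (x ⬝ᵥ A *ᵥ x) := calc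
    l1 ≤ l1 * (n * (x ⬝ᵥ x)) := by
      simpa using mul_le_mul_of_nonneg_left
        (one_le_card_mul_dotProduct_self_of_mem_stdSimplex hx) hl1.le
    _ = n * (l1 * (x ⬝ᵥ x)) := by ring
    _ ≤ n * (x ⬝ᵥ A *ᵥ x) := by gcongr; exact hA.isHermitian.le_dotProduct_mulVec hmin x
  have hs0 : 0 < x ⬝ᵥ A *ᵥ x := pos_of_mul_pos_right (hl1.trans_le hs) n.cast_nonneg
  calc |hH.eigenvalues i| = |η - v ⬝ᵥ hessPhi A x *ᵥ v| := by rw [hH.eigenvalues_smul_one_sub]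
    _ ≤ η + 2 * (v ⬝ᵥ A *ᵥ v) / (x ⬝ᵥ A *ᵥ x) := by
      grw [abs_sub, abs_of_pos hη, abs_dotProduct_hessPhi_mulVec_le hA.posSemidef x v]
    _ ≤ η + 2 * n * κ := by
      rw [hκ, mul_div_assoc', add_le_add_iff_left, div_le_div_iff₀ hs0 hl1]
      nlinarith

theorem g_smoothness_bound (n : ℕ) (A : Matrix (Fin n) (Fin n) ℝ)
    (hA : A.PosDef) (l1 ln κ η : ℝ) (hη : 0 < η)
    (hmin : ∀ i, l1 ≤ hA.isHermitian.eigenvalues i)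
    (hminmem : ∃ i, hA.isHermitian.eigenvalues i = l1)
    (hmax : ∀ i, hA.isHermitian.eigenvalues i ≤ ln)
    (hmaxmem : ∃ i, hA.isHermitian.eigenvalues i = ln)
    (hκ : κ = ln / l1) :
    ∀ x ∈ stdSimplex ℝ (Fin n),
      ∀ (hH : (η • (1 : Matrix (Fin n) (Fin n) ℝ) - hessPhi A x).IsHermitian),
        ∀ i, |hH.eigenvalues i| ≤ η + 2 * n * κ :=
  g_smoothness_bound_general n A hA l1 ln κ η hη hmin hminmem hmax hκ
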